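/- Let p ≥ 5 be a prime and let a, b, c, d be integers with p not dividing d. For the one-parameter family y² = 4x³ + a x² + b x + c + d t, the second-moment sum satisfies: if p does not divide a² − 12b, then ∑_{t mod p} a_t(p)² = p² − p − p·χ(−48) − p·χ(a² − 12b), and if p divides a² − 12b, then ∑_{t mod p} a_t(p)² = p² − p + p(p − 1)·χ(−48), where a_t(p) := −∑_{x mod p} χ(4x³ + a x² + b x + c + d t). -/

import Mathlib

/-!
Write `g(x) = 4x³ + ax² + bx + c`. Since `t ↦ dt` is a bijection, expanding the square and
summing over `t` first turns each cross term into the correlation `∑ₛ χ(s) χ(s + w) = p[w = 0] - 1`,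
so the second moment is `p · #{(x, y) | g x = g y} - p²`. Factoring `g y - g x = (y - x) Qₓ(y)`,
the pairs are counted by the quadratic root counts `1 + χ(disc)`: the diagonal contributes `p`,
the roots of the quadratics `Qₓ` contribute `p + ∑ₓ χ(disc Qₓ)`, and the overlap is the set of critical
points `g'(x) = 0`, of size `1 + χ(a² - 12b)`. Finally `disc Qₓ` is itself a quadratic in `x` with
leading coefficient `-48` and discriminant `16² (a² - 12b)`, whose character sum is classical.
-/

open Finset

variable {F : Type*} [Field F] [Fintype F]

lemma sum_mul_add_comp {M : Type*} [AddCommMonoid M] (f : F → M) {a : F} (ha : a ≠ 0) (b : F) :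
    ∑ x, f (a * x + b) = ∑ x, f x :=
  Fintype.sum_equiv ((Equiv.mulLeft₀ a ha).trans (Equiv.addRight b)) _ _ fun _ => rfl

variable [DecidableEq F]

lemma quadraticChar_sum_mul_add (hF : ringChar F ≠ 2) (w : F) :
    ∑ t : F, quadraticChar F t * quadraticChar F (t + w) =
      if w = 0 then (Fintype.card F : ℤ) - 1 else -1 := by
  split_ifs with hw
  · have hsq (t : F) : quadraticChar F t * quadraticChar F t = if t = 0 then 0 else 1 := by
      split_ifs with ht
      · simp [ht]
      · rw [← sq, quadraticChar_sq_one ht]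
    simp only [hw, add_zero, hsq]
    rw [sum_ite, sum_const_zero, zero_add, sum_const, filter_ne', card_erase_of_mem (mem_univ _)]
    simp [Nat.cast_sub Fintype.card_pos]
  · -- substituting `t = -w s` turns the sum into `χ(-1)` times the Jacobi sum `J(χ, χ)`
    have hJ : jacobiSum (quadraticChar F) (quadraticChar F) = -quadraticChar F (-1) := by
      simpa [(quadraticChar_isQuadratic F).inv] using
        jacobiSum_nontrivial_inv (quadraticChar_ne_one hF)
    have hsub (s : F) : quadraticChar F (-1) * (quadraticChar F s * quadraticChar F (1 - s)) =
        quadraticChar F (-w * s) * quadraticChar F (-w * s + w) := by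
      rw [show -w * s + w = w * (1 - s) by ring, show -w * s = -1 * w * s by ring,
        map_mul, map_mul, map_mul]
      linear_combination -(quadraticChar F (-1) * quadraticChar F s * quadraticChar F (1 - s)) *
        quadraticChar_sq_one hw
    rw [← Fintype.sum_equiv (Equiv.mulLeft₀ (-w) (neg_ne_zero.2 hw)) _ _ hsub,
      ← mul_sum, ← jacobiSum, hJ]
    linear_combination -quadraticChar_sq_one (neg_ne_zero.2 (one_ne_zero' F))

lemma quadraticChar_sum_sq_add (hF : ringChar F ≠ 2) (f : F) :
    ∑ x : F, quadraticChar F (x ^ 2 + f) = if f = 0 then (Fintype.card F : ℤ) - 1 else -1 := by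
  have hfiber (z : F) : ∑ x with x ^ 2 = z, quadraticChar F (x ^ 2 + f) =
      (quadraticChar F z + 1) * quadraticChar F (z + f) := by
    rw [sum_congr rfl fun x hx => by rw [(mem_filter.1 hx).2], sum_const, nsmul_eq_mul,
      ← quadraticChar_card_sqrts hF z, Set.toFinset_ofPred]
  have hshift : ∑ z : F, quadraticChar F (z + f) = 0 := by
    rw [← quadraticChar_sum_zero hF]
    simpa using sum_mul_add_comp (quadraticChar F ·) one_ne_zero f
  rw [← sum_fiberwise univ (· ^ 2), sum_congr rfl fun z _ => hfiber z]
  simp only [add_mul, one_mul, sum_add_distrib, hshift, add_zero]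
  exact quadraticChar_sum_mul_add hF f

lemma quadraticChar_sum_quadratic (hF : ringChar F ≠ 2) {α : F} (hα : α ≠ 0) (β γ : F) :
    ∑ x : F, quadraticChar F (α * x ^ 2 + β * x + γ) =
      if discrim α β γ = 0 then ((Fintype.card F : ℤ) - 1) * quadraticChar F α
      else -quadraticChar F α := by
  have h2 : (2 : F) ≠ 0 := Ring.two_ne_zero hF
  -- completing the square: `(2αx + β)² - discrim α β γ = 4α (αx² + βx + γ)`
  have hsq (x : F) : quadraticChar F (α * x ^ 2 + β * x + γ) =
      quadraticChar F α * quadraticChar F ((2 * α * x + β) ^ 2 + -discrim α β γ) := by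
    rw [show (2 * α * x + β) ^ 2 + -discrim α β γ = 2 ^ 2 * α * (α * x ^ 2 + β * x + γ) by
        rw [discrim]; ring, map_mul, map_mul, quadraticChar_sq_one' h2, one_mul, ← mul_assoc,
      ← sq, quadraticChar_sq_one hα, one_mul]
  rw [sum_congr rfl fun x _ => hsq x, ← mul_sum,
    sum_mul_add_comp (fun z => quadraticChar F (z ^ 2 + -discrim α β γ)) (mul_ne_zero h2 hα),
    quadraticChar_sum_sq_add hF]
  simp only [neg_eq_zero]
  split_ifs <;> ring

lemma card_quadratic_roots (hF : ringChar F ≠ 2) {α : F} (hα : α ≠ 0) (β γ : F) :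
    (#{x | α * x ^ 2 + β * x + γ = 0} : ℤ) = quadraticChar F (discrim α β γ) + 1 := by
  have : NeZero (2 : F) := ⟨Ring.two_ne_zero hF⟩
  rw [← quadraticChar_card_sqrts hF, Set.toFinset_ofPred, natCast_card_filter, natCast_card_filter,
    ← sum_mul_add_comp (fun z => if z ^ 2 = discrim α β γ then (1 : ℤ) else 0)
      (mul_ne_zero two_ne_zero hα) β]
  refine sum_congr rfl fun x _ => ?_
  simp only [sq x, quadratic_eq_zero_iff_discrim_eq_sq hα, eq_comm]

lemma card_filter_sub_mul_eq_zero (q : F → F) (x : F) :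
    (#{y | (y - x) * q y = 0} : ℤ) = #{y | q y = 0} + 1 - if q x = 0 then 1 else 0 := by
  have : ({y | (y - x) * q y = 0} : Finset F) = insert x ({y | q y = 0} : Finset F) := by
    ext y
    simp [sub_eq_zero]
  rw [this, card_insert_eq_ite]
  split_ifs <;> simp_all

lemma sum_sq_sum_quadraticChar_add_mul {ι : Type*} [Fintype ι] (hF : ringChar F ≠ 2)
    (g : ι → F) {D : F} (hD : D ≠ 0) :
    ∑ t : F, (∑ x, quadraticChar F (g x + D * t)) ^ 2 =
      Fintype.card F * ∑ x, (#{y | g y = g x} : ℤ) - Fintype.card ι ^ 2 := by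
  have hcorr (x y : ι) :
      ∑ t : F, quadraticChar F (g x + D * t) * quadraticChar F (g y + D * t) =
        Fintype.card F * (if g y = g x then 1 else 0) - 1 := by
    calc ∑ t : F, quadraticChar F (g x + D * t) * quadraticChar F (g y + D * t)
        = ∑ t : F, quadraticChar F (D * t + g x) * quadraticChar F (D * t + g x + (g y - g x)) :=
          sum_congr rfl fun t _ => by rw [add_add_sub_cancel, add_comm (D * t), add_comm (D * t)]
      _ = ∑ s : F, quadraticChar F s * quadraticChar F (s + (g y - g x)) :=
          sum_mul_add_comp (fun s => quadraticChar F s * quadraticChar F (s + (g y - g x))) hD _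
      _ = _ := by
          simp only [quadraticChar_sum_mul_add hF, sub_eq_zero]
          split_ifs <;> ring
  calc ∑ t : F, (∑ x, quadraticChar F (g x + D * t)) ^ 2
      = ∑ x, ∑ y, ∑ t : F, quadraticChar F (g x + D * t) * quadraticChar F (g y + D * t) := by
        simp only [sq, sum_mul_sum]
        rw [sum_comm]
        exact sum_congr rfl fun x _ => sum_comm
    _ = _ := by
        simp only [hcorr, sum_sub_distrib, ← mul_sum, natCast_card_filter]
        simp [sq]

lemma sum_card_fiber_cubic (hF : ringChar F ≠ 2) (h3 : (3 : F) ≠ 0) (A B C : F) :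
    ∑ x : F, (#{y | 4 * y ^ 3 + A * y ^ 2 + B * y + C = 4 * x ^ 3 + A * x ^ 2 + B * x + C} : ℤ) =
      2 * Fintype.card F - 1 - quadraticChar F (A ^ 2 - 12 * B) +
        if A ^ 2 - 12 * B = 0 then ((Fintype.card F : ℤ) - 1) * quadraticChar F (-48)
        else -quadraticChar F (-48) := by
  have h2 : (2 : F) ≠ 0 := Ring.two_ne_zero hF
  have h4 : (4 : F) ≠ 0 := by simpa [show (4 : F) = 2 ^ 2 by norm_num] using h2
  have h12 : (12 : F) ≠ 0 := by simpa [show (12 : F) = 4 * 3 by norm_num] using ⟨h4, h3⟩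
  have h48 : (-48 : F) ≠ 0 := by simpa [show (-48 : F) = -(4 * 12) by norm_num] using ⟨h4, h12⟩
  have h16 : (16 : F) ^ 2 ≠ 0 := by simpa [show (16 : F) ^ 2 = 4 ^ 4 by norm_num] using h4
  have hfiber (x : F) :
      (#{y | 4 * y ^ 3 + A * y ^ 2 + B * y + C = 4 * x ^ 3 + A * x ^ 2 + B * x + C} : ℤ) =
        (quadraticChar F ((-48) * x ^ 2 + (-8 * A) * x + (A ^ 2 - 16 * B)) + 1) + 1 -
          if 12 * x ^ 2 + 2 * A * x + B = 0 then 1 else 0 := by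
    have hfactor (y : F) :
        4 * y ^ 3 + A * y ^ 2 + B * y + C = 4 * x ^ 3 + A * x ^ 2 + B * x + C ↔
          (y - x) * (4 * y ^ 2 + (4 * x + A) * y + (4 * x ^ 2 + A * x + B)) = 0 := by
      rw [← sub_eq_zero, show 4 * y ^ 3 + A * y ^ 2 + B * y + C - (4 * x ^ 3 + A * x ^ 2 + B * x + C) =
        (y - x) * (4 * y ^ 2 + (4 * x + A) * y + (4 * x ^ 2 + A * x + B)) by ring]
    rw [filter_congr fun y _ => hfactor y, card_filter_sub_mul_eq_zero, card_quadratic_roots hF h4,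
      discrim, show (4 * x + A) ^ 2 - 4 * 4 * (4 * x ^ 2 + A * x + B) =
        (-48) * x ^ 2 + (-8 * A) * x + (A ^ 2 - 16 * B) by ring]
    simp only [show 4 * x ^ 2 + (4 * x + A) * x + (4 * x ^ 2 + A * x + B) =
      12 * x ^ 2 + 2 * A * x + B by ring]
  have hcritical : ∑ x : F, (if 12 * x ^ 2 + 2 * A * x + B = 0 then 1 else 0 : ℤ) =
      quadraticChar F (A ^ 2 - 12 * B) + 1 := by
    rw [← natCast_card_filter, card_quadratic_roots hF h12, discrim,
      show (2 * A) ^ 2 - 4 * 12 * B = 2 ^ 2 * (A ^ 2 - 12 * B) by ring, map_mul,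
      quadraticChar_sq_one' h2, one_mul]
  have hdisc : discrim (-48 : F) (-8 * A) (A ^ 2 - 16 * B) = 16 ^ 2 * (A ^ 2 - 12 * B) := by
    rw [discrim]
    ring
  simp only [hfiber, sum_sub_distrib, sum_add_distrib, hcritical,
    quadraticChar_sum_quadratic hF h48, hdisc, mul_eq_zero, h16, false_or, sum_const, card_univ,
    nsmul_eq_mul, mul_one]
  split_ifs <;> ring

/-- For a prime `p ≥ 5`, integers `a, b, c, d` with `p ∤ d`, and the
one-parameter family `y² = 4x³ + a x² + b x + c + d t`: if `p ∤ a² - 12b` the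
second-moment sum is `p² - p - p χ(-48) - p χ(a² - 12b)`, and if `p ∣ a² - 12b`
it is `p² - p + p(p - 1) χ(-48)`. -/
theorem second_moment_family_linear_t (p : ℕ) [Fact p.Prime] (hp : 5 ≤ p)
    (a b c d : ℤ) (hd : ¬ (p : ℤ) ∣ d) :
    (¬ (p : ℤ) ∣ (a ^ 2 - 12 * b) →
      ∑ t : ZMod p,
        (-∑ x : ZMod p,
          legendreSym p (4 * (x.val : ℤ) ^ 3 + a * (x.val : ℤ) ^ 2 + b * (x.val : ℤ)
            + c + d * (t.val : ℤ))) ^ 2 =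
        (p : ℤ) ^ 2 - (p : ℤ) - (p : ℤ) * legendreSym p (-48)
          - (p : ℤ) * legendreSym p (a ^ 2 - 12 * b)) ∧
    ((p : ℤ) ∣ (a ^ 2 - 12 * b) →
      ∑ t : ZMod p,
        (-∑ x : ZMod p,
          legendreSym p (4 * (x.val : ℤ) ^ 3 + a * (x.val : ℤ) ^ 2 + b * (x.val : ℤ)
            + c + d * (t.val : ℤ))) ^ 2 =
        (p : ℤ) ^ 2 - (p : ℤ) + (p : ℤ) * ((p : ℤ) - 1) * legendreSym p (-48)) := by
  have hF : ringChar (ZMod p) ≠ 2 := by rw [ZMod.ringChar_zmod_n]; omega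
  have h3 : (3 : ZMod p) ≠ 0 := by
    exact_mod_cast (ZMod.natCast_eq_zero_iff 3 p).not.2 fun h => by
      have := Nat.le_of_dvd three_pos h; omega
  have hD : (d : ZMod p) ≠ 0 := (ZMod.intCast_zmod_eq_zero_iff_dvd d p).not.2 hd
  have hχ (n : ℤ) : legendreSym p n = quadraticChar (ZMod p) n := rfl
  have hmoment : ∑ t : ZMod p, (-∑ x : ZMod p,
      legendreSym p (4 * (x.val : ℤ) ^ 3 + a * (x.val : ℤ) ^ 2 + b * (x.val : ℤ)
        + c + d * (t.val : ℤ))) ^ 2 =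
      p * (2 * p - 1 - legendreSym p (a ^ 2 - 12 * b) +
        if ((a ^ 2 - 12 * b : ℤ) : ZMod p) = 0 then ((p : ℤ) - 1) * legendreSym p (-48)
        else -legendreSym p (-48)) - p ^ 2 := by
    simp only [neg_sq, hχ, Int.cast_add, Int.cast_mul, Int.cast_pow, Int.cast_natCast,
      ZMod.natCast_zmod_val, Int.cast_ofNat]
    rw [sum_sq_sum_quadraticChar_add_mul hF _ hD, sum_card_fiber_cubic hF h3, ZMod.card]
    push_cast
    rfl
  have hΔ := ZMod.intCast_zmod_eq_zero_iff_dvd (a ^ 2 - 12 * b) p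
  refine ⟨fun hndvd => ?_, fun hdvd => ?_⟩
  · rw [hmoment, if_neg (hΔ.not.2 hndvd)]
    ring
  · rw [hmoment, if_pos (hΔ.2 hdvd), hχ (a ^ 2 - 12 * b), hΔ.2 hdvd, MulChar.map_zero]
    ring
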